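/- For $t\in(-1,1)$ let $\rho=\rho(t)=\sqrt{1+t^2}$, $y(t)=(2-\rho)^{-2/3}(1+\rho)^{-1/3}$, $x(t)=t\,y(t)$, and $r(t)=(x(t),y(t))$. Then for every $t\in(-1,1)$ the unit tangent vector satisfies $\dfrac{r'(t)}{|r'(t)|}=\dfrac{\big(1+\rho,\;t\big)}{\sqrt{2\rho\,(1+\rho)}}$. -/

import Mathlib

open Set

noncomputable def ρ (t : ℝ) : ℝ := Real.sqrt (1 + t ^ 2)

noncomputable def yfun (t : ℝ) : ℝ :=
  (2 - ρ t) ^ (-(2 : ℝ) / 3) * (1 + ρ t) ^ (-(1 : ℝ) / 3)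

noncomputable def xfun (t : ℝ) : ℝ := t * yfun t

/-! Using `ρ' = t / ρ` and `ρ² = 1 + t²`, both derivatives share the positive factor
`y / ((2 - ρ)(1 + ρ))`: `x' = y / (2 - ρ)` and `y' = t y / ((2 - ρ)(1 + ρ))`. So the tangent points
along `(1 + ρ, t)`, whose squared length is `(1 + ρ)² + t² = 2ρ(1 + ρ)`. -/

lemma inv_sqrt_sq_add_sq_smul_mul_left {c : ℝ} (hc : 0 < c) (a b : ℝ) :
    (Real.sqrt ((c * a) ^ 2 + (c * b) ^ 2))⁻¹ • ((c * a, c * b) : ℝ × ℝ) =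
      (Real.sqrt (a ^ 2 + b ^ 2))⁻¹ • ((a, b) : ℝ × ℝ) := by
  have hsqrt : Real.sqrt ((c * a) ^ 2 + (c * b) ^ 2) = c * Real.sqrt (a ^ 2 + b ^ 2) := by
    rw [show (c * a) ^ 2 + (c * b) ^ 2 = c ^ 2 * (a ^ 2 + b ^ 2) by ring,
      Real.sqrt_mul (sq_nonneg c), Real.sqrt_sq hc.le]
  rw [hsqrt, show ((c * a, c * b) : ℝ × ℝ) = c • (a, b) from rfl, smul_smul, mul_inv,
    mul_right_comm, inv_mul_cancel₀ hc.ne', one_mul]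

lemma rho_pos (t : ℝ) : 0 < ρ t := Real.sqrt_pos.2 (by positivity)

lemma rho_sq (t : ℝ) : ρ t ^ 2 = 1 + t ^ 2 := Real.sq_sqrt (by positivity)

lemma one_add_rho_sq_add_sq (t : ℝ) : (1 + ρ t) ^ 2 + t ^ 2 = 2 * ρ t * (1 + ρ t) := by
  linear_combination (-1 : ℝ) * rho_sq t

lemma rho_lt_two {t : ℝ} (ht : t ^ 2 < 3) : ρ t < 2 := by
  rw [ρ, Real.sqrt_lt' two_pos]
  linarith

lemma yfun_pos {t : ℝ} (ht : ρ t < 2) : 0 < yfun t :=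
  mul_pos (Real.rpow_pos_of_pos (by linarith) _)
    (Real.rpow_pos_of_pos (by linarith [rho_pos t]) _)

lemma hasDerivAt_rho (t : ℝ) : HasDerivAt ρ (t / ρ t) t := by
  have h := ((hasDerivAt_pow 2 t).const_add 1).sqrt (by positivity : 1 + t ^ 2 ≠ 0)
  refine h.congr_deriv ?_
  rw [ρ]
  field_simp
  ring

lemma hasDerivAt_yfun {t : ℝ} (ht : ρ t < 2) :
    HasDerivAt yfun (yfun t / ((2 - ρ t) * (1 + ρ t)) * t) t := by
  have hA : 0 < 2 - ρ t := by linarith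
  have hB : 0 < 1 + ρ t := by linarith [rho_pos t]
  have h := ((hasDerivAt_rho t).const_sub 2 |>.rpow_const (p := -(2 : ℝ) / 3) (Or.inl hA.ne')).mul
    ((hasDerivAt_rho t).const_add 1 |>.rpow_const (p := -(1 : ℝ) / 3) (Or.inl hB.ne'))
  refine h.congr_deriv ?_
  rw [Real.rpow_sub hA, Real.rpow_sub hB, Real.rpow_one, Real.rpow_one, yfun]
  have hρ := (rho_pos t).ne'
  field_simp
  ring

lemma hasDerivAt_xfun {t : ℝ} (ht : ρ t < 2) :
    HasDerivAt xfun (yfun t / ((2 - ρ t) * (1 + ρ t)) * (1 + ρ t)) t := by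
  have hA : 0 < 2 - ρ t := by linarith
  have hB : 0 < 1 + ρ t := by linarith [rho_pos t]
  refine ((hasDerivAt_id t).mul (hasDerivAt_yfun ht)).congr_deriv ?_
  simp only [id]
  field_simp
  linear_combination -(yfun t) * rho_sq t

/-- The unit tangent vector of the boundary parametrization. -/
theorem unit_tangent_formula :
    ∀ t ∈ Ioo (-1 : ℝ) 1,
      (Real.sqrt ((deriv xfun t) ^ 2 + (deriv yfun t) ^ 2))⁻¹ •
          ((deriv xfun t, deriv yfun t) : ℝ × ℝ) =
        (Real.sqrt (2 * ρ t * (1 + ρ t)))⁻¹ • ((1 + ρ t, t) : ℝ × ℝ) := by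
  intro t ⟨h₁, h₂⟩
  have hρ : ρ t < 2 := rho_lt_two (by nlinarith)
  have hc : 0 < yfun t / ((2 - ρ t) * (1 + ρ t)) :=
    div_pos (yfun_pos hρ) (mul_pos (by linarith) (by linarith [rho_pos t]))
  rw [(hasDerivAt_xfun hρ).deriv, (hasDerivAt_yfun hρ).deriv,
    inv_sqrt_sq_add_sq_smul_mul_left hc, one_add_rho_sq_add_sq]
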